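/- Assume the constraint h^(2) − 2h_1 = z² holds in R((z⁻¹)). Then the series H^(3) := h^(3) − 3h_1·h^(1) + 3h_2·h^(0) satisfies: the coefficient of z³ in H^(3) equals 1; the coefficients of z², z¹ and z⁰ in H^(3) all vanish; and the coefficients of z^{-1}, z^{-2}, z^{-3} in H^(3) are h_3 − h_1², h_4 − h_1h_2, and h_5 − h_1h_3, respectively. -/

import Mathlib

/-
We model the ring `R((z⁻¹))` of formal Laurent series in `z⁻¹` over `R`
as `HahnSeries ℤ R`, with the convention that the index `n : ℤ` records the
coefficient of `z^(-n)`; thus the coefficient of `zᵐ` in `f` is `f.coeff (-m)`,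
`z = HahnSeries.single (-1) 1`, and `h_l = h.coeff l` for `l ≥ 1`.
-/

/-- The coefficientwise extension of an additive map `d : R → R` to `R((z⁻¹))`. -/
noncomputable def coeffExt {R : Type*} [CommRing R] (d : R →+ R)
    (f : HahnSeries ℤ R) : HahnSeries ℤ R where
  coeff n := d (f.coeff n)
  isPWO_support' := f.isPWO_support'.mono (fun n hn => by
    simp only [Function.mem_support] at hn ⊢
    exact fun h => hn (by rw [h, map_zero]))

/-- The Faà di Bruno iterates `h^(0) = 1`, `h^(k+1) = d(h^(k)) + h * h^(k)` in `R((z⁻¹))`. -/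
noncomputable def fdb {R : Type*} [CommRing R] (d : R →+ R)
    (h : HahnSeries ℤ R) : ℕ → HahnSeries ℤ R
  | 0 => 1
  | k + 1 => coeffExt d (fdb d h k) + h * fdb d h k

/-
The constraint pins down `h^(2) = z² + 2h_1` completely.  Reading off its `z⁻¹`-coefficient
from `h^(2) = d h + h²` gives `d h_1 = -2h_2`, and since `d` kills `1`, applying `d` to
`z² + 2h_1` leaves only the constant `-4h_2`.  Hence `H^(3) = z² h - h_1 h - h_2`, whose
coefficients are read off directly.
-/

open HahnSeries

theorem map_one_eq_zero_of_leibniz {R : Type*} [CommRing R] {d : R →+ R}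
    (hd : ∀ a b : R, d (a * b) = a * d b + d a * b) : d 1 = 0 := by
  simpa using hd 1 1

section coeffExt

variable {R : Type*} [CommRing R] (d : R →+ R)

@[simp]
theorem coeff_coeffExt (f : HahnSeries ℤ R) (n : ℤ) : (coeffExt d f).coeff n = d (f.coeff n) :=
  rfl

theorem coeffExt_add (f g : HahnSeries ℤ R) :
    coeffExt d (f + g) = coeffExt d f + coeffExt d g := by
  ext n
  simp

theorem coeffExt_single (a : ℤ) (r : R) : coeffExt d (single a r) = single a (d r) := by
  ext n
  by_cases hn : n = a <;> simp [hn]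

end coeffExt

section fdb

variable {R : Type*} [CommRing R] (d : R →+ R) (h : HahnSeries ℤ R)

theorem fdb_zero : fdb d h 0 = 1 :=
  rfl

theorem fdb_succ (k : ℕ) : fdb d h (k + 1) = coeffExt d (fdb d h k) + h * fdb d h k :=
  rfl

theorem fdb_one (hd1 : d 1 = 0) : fdb d h 1 = h := by
  have : coeffExt d 1 = 0 := by
    rw [← single_zero_one, coeffExt_single, hd1, single_eq_zero]
  rw [fdb_succ, fdb_zero, this, zero_add, mul_one]

theorem fdb_two (hd1 : d 1 = 0) : fdb d h 2 = coeffExt d h + h * h := by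
  rw [fdb_succ, fdb_one d h hd1]

end fdb

section

variable {R : Type*} [CommRing R] {h : HahnSeries ℤ R}

theorem one_le_orderTop_sub_single (hz : h.coeff (-1) = 1) (h0 : h.coeff 0 = 0)
    (hpos : ∀ m : ℤ, 2 ≤ m → h.coeff (-m) = 0) :
    (1 : WithTop ℤ) ≤ (h - single (-1) 1).orderTop := by
  refine le_orderTop_iff_forall.mpr fun n hn => ?_
  have hn : n < 1 := by exact_mod_cast hn
  rw [coeff_sub, coeff_single]
  obtain rfl | hne := eq_or_ne n (-1)
  · simp [hz]
  obtain rfl | hne0 := eq_or_ne n 0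
  · simp [h0]
  simpa [hne] using hpos (-n) (by omega)

theorem coeff_mul_self_one (hz : h.coeff (-1) = 1) (h0 : h.coeff 0 = 0)
    (hpos : ∀ m : ℤ, 2 ≤ m → h.coeff (-m) = 0) :
    (h * h).coeff 1 = 2 * h.coeff 2 := by
  set t := h - single (-1) 1 with ht
  have ht_order := one_le_orderTop_sub_single hz h0 hpos
  have htt : (t * t).coeff 1 = 0 :=
    coeff_eq_zero_of_lt_orderTop <| lt_of_lt_of_le (by norm_num) <|
      (add_le_add ht_order ht_order).trans orderTop_add_le_mul
  have hh : h * h = single (-1) 1 * single (-1) 1 + single (-1) 1 * t + single (-1) 1 * t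
      + t * t := by
    rw [ht]; ring
  have ht2 : t.coeff 2 = h.coeff 2 := by simp [ht]
  rw [hh, coeff_add, coeff_add, coeff_add, htt, single_mul_single, coeff_single_mul]
  simp only [Int.reduceNeg, Int.reduceAdd, sub_neg_eq_add, coeff_single_of_ne, ne_eq,
    reduceCtorEq, not_false_eq_true, ht2, one_mul, zero_add, add_zero]
  ring

end

section

variable {R : Type*} [CommRing R] {d : R →+ R} {h : HahnSeries ℤ R}

theorem map_coeff_one_of_fdb_two_eq (hd1 : d 1 = 0) (hz : h.coeff (-1) = 1)
    (h0 : h.coeff 0 = 0) (hpos : ∀ m : ℤ, 2 ≤ m → h.coeff (-m) = 0)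
    (h2 : fdb d h 2 = single (-2) 1 + C (2 * h.coeff 1)) :
    d (h.coeff 1) = -(2 * h.coeff 2) := by
  have h2_coeff := congrArg (coeff · 1) h2
  simp only [fdb_two d h hd1, coeff_add, coeff_coeffExt, coeff_mul_self_one hz h0 hpos, C_apply,
    coeff_single_of_ne, ne_eq, reduceCtorEq, not_false_eq_true, one_ne_zero, add_zero] at h2_coeff
  linear_combination h2_coeff

theorem fdb_three_sub_smul_add_smul_eq (hd1 : d 1 = 0)
    (hdh1 : d (h.coeff 1) = -(2 * h.coeff 2))
    (h2 : fdb d h 2 = single (-2) 1 + C (2 * h.coeff 1)) :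
    fdb d h 3 - (3 * h.coeff 1) • fdb d h 1 + (3 * h.coeff 2) • fdb d h 0 =
      single (-2) 1 * h - C (h.coeff 1) * h - C (h.coeff 2) := by
  have hd2 : d (2 * h.coeff 1) = -(4 * h.coeff 2) := by
    rw [two_mul, map_add, hdh1]; ring
  rw [fdb_succ, h2, coeffExt_add, C_apply, coeffExt_single, coeffExt_single, hd1, single_eq_zero,
    hd2, fdb_one d h hd1, fdb_zero]
  simp only [← C_mul_eq_smul, ← C_apply, map_mul, map_neg, map_ofNat]
  ring

end

/-- Let `h = z + Σ_{l ≥ 1} h_l z^(-l)` in `R((z⁻¹))` and assume the constraint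
`h^(2) - 2h_1 = z²`.  Then `H^(3) := h^(3) - 3h_1 • h^(1) + 3h_2 • h^(0)`
satisfies: the coefficient of `z³` equals `1`; the coefficients of `z²`, `z¹`,
`z⁰` all vanish; and the coefficients of `z⁻¹`, `z⁻²`, `z⁻³` are
`h_3 - h_1²`, `h_4 - h_1h_2`, `h_5 - h_1h_3` respectively. -/
theorem H3_coefficients
    {R : Type*} [CommRing R] (d : R →+ R)
    (hd : ∀ a b : R, d (a * b) = a * d b + d a * b)
    (h : HahnSeries ℤ R)
    (hz : h.coeff (-1) = 1)
    (h0 : h.coeff 0 = 0)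
    (hpos : ∀ m : ℤ, 2 ≤ m → h.coeff (-m) = 0)
    (constraint : fdb d h 2 - HahnSeries.C (2 * h.coeff 1) =
      (HahnSeries.single (-1 : ℤ) (1 : R)) ^ 2) :
    (fdb d h 3 - (3 * h.coeff 1) • fdb d h 1
        + (3 * h.coeff 2) • fdb d h 0).coeff (-3) = 1 ∧
    (fdb d h 3 - (3 * h.coeff 1) • fdb d h 1
        + (3 * h.coeff 2) • fdb d h 0).coeff (-2) = 0 ∧
    (fdb d h 3 - (3 * h.coeff 1) • fdb d h 1
        + (3 * h.coeff 2) • fdb d h 0).coeff (-1) = 0 ∧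
    (fdb d h 3 - (3 * h.coeff 1) • fdb d h 1
        + (3 * h.coeff 2) • fdb d h 0).coeff 0 = 0 ∧
    (fdb d h 3 - (3 * h.coeff 1) • fdb d h 1
        + (3 * h.coeff 2) • fdb d h 0).coeff 1 = h.coeff 3 - h.coeff 1 ^ 2 ∧
    (fdb d h 3 - (3 * h.coeff 1) • fdb d h 1
        + (3 * h.coeff 2) • fdb d h 0).coeff 2 = h.coeff 4 - h.coeff 1 * h.coeff 2 ∧
    (fdb d h 3 - (3 * h.coeff 1) • fdb d h 1
        + (3 * h.coeff 2) • fdb d h 0).coeff 3 = h.coeff 5 - h.coeff 1 * h.coeff 3 := by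
  have hd1 := map_one_eq_zero_of_leibniz hd
  have h2 : fdb d h 2 = single (-2) 1 + C (2 * h.coeff 1) := by
    rw [← sub_eq_iff_eq_add, constraint, single_pow]
    norm_num
  have hdh1 := map_coeff_one_of_fdb_two_eq hd1 hz h0 hpos h2
  have hcoeff (n : ℤ) :
      (single (-2) 1 * h - C (h.coeff 1) * h - C (h.coeff 2)).coeff n =
        h.coeff (n + 2) - h.coeff 1 * h.coeff n - if n = 0 then h.coeff 2 else 0 := by
    simp [coeff_single_mul, coeff_single]
  simp only [fdb_three_sub_smul_add_smul_eq hd1 hdh1 h2, hcoeff]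
  norm_num [hz, h0, hpos 2 le_rfl, hpos 3 (by norm_num), sq]
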